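/- For the logarithmic rate function, define for a fixed slot n the map T(w) = min{w^e(w), w^b(w)} where w^e(w) = min over u of (e_n + Σ_{l=n+1}^{n+u} H_l + Σ_{l=n}^{n+u} min{1/γ_l, w}) / (u+1) and log₂(w^b(w)) = min over v of (b_n + Σ_{l=n+1}^{n+v} B_l + (1/2)Σ_{l=n}^{n+v} log₂(min{1/γ_l, w})) / ((v+1)/2). Then T is monotone non-decreasing, and the fixed-point iteration w^{(k+1)} = T(w^{(k)}) started from any w^{(1)} ≥ w* (where w* is the unique fixed point of T with w* > 0) produces a non-increasing sequence converging to w*. -/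

import Mathlib

/-! Both causality bounds are infima over the horizon of averages of clipped terms `min c w`,
and `w ↦ min c w` is monotone with `w - min c w` monotone as well. Both properties survive
averaging and taking infima, so `w^e` is monotone and `1`-Lipschitz; since
`log₂ min(c, w) = min(log₂ c, log₂ w)`, the same holds for `log₂ w^b` as a function of `log₂ w`.
Hence `T` is monotone and continuous on `(0, ∞)`, and `T w ≤ w` for `w ≥ w*`: whichever bound
attains `T w* = w*` cannot grow faster than `w` (resp. than `log₂ w` on the log scale).
The iterates therefore decrease to a limit which, by continuity, is a fixed point, hence `w*`. -/

open Finset Filter Topology Function Real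

theorem LipschitzWith.one_of_monotone_of_monotone_sub {F : ℝ → ℝ} (hF : Monotone F)
    (hF' : Monotone fun t => t - F t) : LipschitzWith 1 F :=
  LipschitzWith.of_le_add fun x y => by
    rw [Real.dist_eq]
    rcases le_total x y with h | h
    · linarith [hF h, abs_nonneg (x - y)]
    · linarith [hF' h, le_abs_self (x - y)]

theorem le_self_of_monotone_sub {F : ℝ → ℝ} (hF : Monotone fun t => t - F t) {x y : ℝ}
    (hx : IsFixedPt F x) (hxy : x ≤ y) : F y ≤ y := by
  have := hF hxy
  simp only [hx.eq, sub_self] at this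
  linarith

theorem min_le_min_add_sub (c : ℝ) {x y : ℝ} (hxy : x ≤ y) : min c y ≤ min c x + (y - x) := by
  rcases le_total c x with h | h
  · rw [min_eq_left h]; linarith [min_le_left c y]
  · rw [min_eq_right h]; linarith [min_le_right c y]

theorem Real.logb_min {β c w : ℝ} (hβ : 1 < β) (hc : 0 < c) (hw : 0 < w) :
    logb β (min c w) = min (logb β c) (logb β w) := by
  rcases le_total c w with h | h
  · rw [min_eq_left h, min_eq_left (logb_le_logb_of_le hβ hc h)]
  · rw [min_eq_right h, min_eq_right (logb_le_logb_of_le hβ hw h)]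

noncomputable def clippedAverageInf (m n : ℕ) (a c : ℕ → ℝ) (w : ℝ) : ℝ :=
  (range (m + 1)).inf' (nonempty_range_iff.mpr (Nat.succ_ne_zero _))
    (fun u => (a u + ∑ l ∈ Icc n (n + u), min (c l) w) / (u + 1))

section clippedAverageInf

variable {m n : ℕ} {a c : ℕ → ℝ}

theorem monotone_clippedAverageInf : Monotone (clippedAverageInf m n a c) := fun x y hxy => by
  unfold clippedAverageInf
  gcongr

theorem monotone_sub_clippedAverageInf :
    Monotone fun t => t - clippedAverageInf m n a c t := fun x y hxy => by
  suffices clippedAverageInf m n a c y ≤ clippedAverageInf m n a c x + (y - x) by linarith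
  refine sub_le_iff_le_add.1 (le_inf' _ _ fun u hu => sub_le_iff_le_add.2 ?_)
  refine (inf'_le _ hu).trans ?_
  have hcard : ((Icc n (n + u)).card : ℝ) = u + 1 := by
    rw [Nat.card_Icc, show n + u + 1 - n = u + 1 by omega]; push_cast; ring
  have hsum : ∑ l ∈ Icc n (n + u), min (c l) y
      ≤ ∑ l ∈ Icc n (n + u), min (c l) x + (u + 1) * (y - x) := by
    calc ∑ l ∈ Icc n (n + u), min (c l) y
        ≤ ∑ l ∈ Icc n (n + u), (min (c l) x + (y - x)) :=
          sum_le_sum fun l _ => min_le_min_add_sub (c l) hxy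
      _ = _ := by rw [sum_add_distrib, sum_const, nsmul_eq_mul, hcard]
  rw [div_add' _ _ _ (by positivity)]
  exact div_le_div_of_nonneg_right (by linarith) (by positivity)

theorem lipschitzWith_one_clippedAverageInf : LipschitzWith 1 (clippedAverageInf m n a c) :=
  .one_of_monotone_of_monotone_sub monotone_clippedAverageInf monotone_sub_clippedAverageInf

theorem inf'_half_logb_eq_clippedAverageInf {β w : ℝ} (hβ : 1 < β) (hc : ∀ l, 0 < c l)
    (hw : 0 < w) :
    (range (m + 1)).inf' (nonempty_range_iff.mpr (Nat.succ_ne_zero _))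
      (fun v => (a v + (1/2) * ∑ l ∈ Icc n (n + v), logb β (min (c l) w))
        / ((v + 1) / 2))
      = clippedAverageInf m n (fun v => 2 * a v) (fun l => logb β (c l)) (logb β w) := by
  unfold clippedAverageInf
  congr 1
  funext v
  rw [sum_congr rfl fun l _ => logb_min hβ (hc l) hw]
  field_simp

end clippedAverageInf

section logScale

variable {β : ℝ} {F G : ℝ → ℝ}

theorem monotoneOn_of_logb_eq (hβ : 1 < β) (hG : ∀ w, 0 < w → 0 < G w)
    (hGF : ∀ w, 0 < w → logb β (G w) = F (logb β w)) (hF : Monotone F) :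
    MonotoneOn G (Set.Ioi 0) := fun x hx y hy hxy => by
  rw [← logb_le_logb hβ (hG x hx) (hG y hy), hGF x hx, hGF y hy]
  exact hF (logb_le_logb_of_le hβ hx hxy)

theorem continuousOn_of_logb_eq (hβ : 1 < β) (hG : ∀ w, 0 < w → 0 < G w)
    (hGF : ∀ w, 0 < w → logb β (G w) = F (logb β w)) (hF : Continuous F) :
    ContinuousOn G (Set.Ioi 0) := by
  have hβ0 : 0 < β := by linarith
  have hrepr : Set.EqOn (fun w => β ^ F (logb β w)) G (Set.Ioi 0) := fun w hw => by
    simp only [← hGF w hw, rpow_logb hβ0 hβ.ne' (hG w hw)]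
  refine ContinuousOn.congr ?_ hrepr.symm
  exact (continuous_const_rpow hβ0.ne').comp_continuousOn
    (hF.comp_continuousOn (continuousOn_logb.mono fun w hw => ne_of_gt hw))

theorem le_self_of_logb_eq (hβ : 1 < β) (hG : ∀ w, 0 < w → 0 < G w)
    (hGF : ∀ w, 0 < w → logb β (G w) = F (logb β w))
    (hF : Monotone fun t => t - F t) {x y : ℝ} (hx : 0 < x) (hfix : IsFixedPt G x)
    (hxy : x ≤ y) : G y ≤ y := by
  have hy : 0 < y := hx.trans_le hxy
  have hFfix : IsFixedPt F (logb β x) := by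
    rw [IsFixedPt, ← hGF x hx, hfix.eq]
  rw [← logb_le_logb hβ (hG y hy) hy, hGF y hy]
  exact le_self_of_monotone_sub hF hFfix (logb_le_logb_of_le hβ hx hxy)

end logScale

theorem antitone_and_tendsto_of_map_le_self {α : Type*} [ConditionallyCompleteLinearOrder α]
    [TopologicalSpace α] [OrderTopology α] {T : α → α} {a : α} (hmono : MonotoneOn T (Set.Ici a))
    (hcont : ContinuousOn T (Set.Ici a)) (hfix : IsFixedPt T a) (hle : ∀ x, a ≤ x → T x ≤ x)
    (huniq : ∀ x, a ≤ x → IsFixedPt T x → x = a) {w : ℕ → α} (h0 : a ≤ w 0)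
    (hw : ∀ k, w (k + 1) = T (w k)) : Antitone w ∧ Tendsto w atTop (𝓝 a) := by
  have hlow : ∀ k, a ≤ w k := by
    intro k
    induction k with
    | zero => exact h0
    | succ k ih => exact hw k ▸ hfix.eq ▸ hmono Set.self_mem_Ici ih ih
  have hanti : Antitone w := antitone_nat_of_succ_le fun k => hw k ▸ hle _ (hlow k)
  have hlim : Tendsto w atTop (𝓝 (⨅ k, w k)) :=
    tendsto_atTop_ciInf hanti ⟨a, Set.forall_mem_range.2 hlow⟩
  have haL : a ≤ ⨅ k, w k := le_ciInf hlow
  have hLfix : IsFixedPt T (⨅ k, w k) := by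
    have hT : Tendsto (fun k => T (w k)) atTop (𝓝 (T (⨅ k, w k))) :=
      (hcont _ haL).tendsto.comp (tendsto_nhdsWithin_iff.2 ⟨hlim, .of_forall hlow⟩)
    refine tendsto_nhds_unique hT ?_
    simpa only [hw] using (tendsto_add_atTop_iff_nat 1).2 hlim
  exact ⟨hanti, huniq _ haL hLfix ▸ hlim⟩

theorem stmt6_general (N n : ℕ) (e b : ℝ)
    (H B γch : ℕ → ℝ) (hγ : ∀ l, 0 < γch l)
    (we wb T : ℝ → ℝ)
    (hwe : ∀ w : ℝ, we w =
      (Finset.range (N - n + 1)).inf'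
        (Finset.nonempty_range_iff.mpr (Nat.succ_ne_zero _))
        (fun u => (e + (∑ l ∈ Finset.Icc (n+1) (n+u), H l)
          + ∑ l ∈ Finset.Icc n (n+u), min (1/γch l) w) / (u+1)))
    (hwbpos : ∀ w : ℝ, 0 < w → 0 < wb w)
    (hwb : ∀ w : ℝ, 0 < w → Real.logb 2 (wb w) =
      (Finset.range (N - n + 1)).inf'
        (Finset.nonempty_range_iff.mpr (Nat.succ_ne_zero _))
        (fun v => (b + (∑ l ∈ Finset.Icc (n+1) (n+v), B l)
          + (1/2) * ∑ l ∈ Finset.Icc n (n+v), Real.logb 2 (min (1/γch l) w))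
          / ((v+1)/2)))
    (hT : ∀ w : ℝ, T w = min (we w) (wb w))
    (wstar : ℝ) (hwstar : 0 < wstar) (hfix : T wstar = wstar)
    (huniq : ∀ w : ℝ, 0 < w → T w = w → w = wstar)
    (wseq : ℕ → ℝ) (hstart : wstar ≤ wseq 0)
    (hiter : ∀ k, wseq (k+1) = T (wseq k)) :
    MonotoneOn T (Set.Ioi (0:ℝ)) ∧
    (∀ k, wseq (k+1) ≤ wseq k) ∧
    Filter.Tendsto wseq Filter.atTop (nhds wstar) := by
  set Fe := clippedAverageInf (N - n) n (fun u => e + ∑ l ∈ Icc (n + 1) (n + u), H l)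
    (fun l => 1 / γch l)
  set Fb := clippedAverageInf (N - n) n (fun v => 2 * (b + ∑ l ∈ Icc (n + 1) (n + v), B l))
    (fun l => logb 2 (1 / γch l))
  have hwe' : we = Fe := funext hwe
  have hwb' (w : ℝ) (hw : 0 < w) : logb 2 (wb w) = Fb (logb 2 w) :=
    (hwb w hw).trans <| inf'_half_logb_eq_clippedAverageInf one_lt_two
      (fun l => one_div_pos.2 (hγ l)) hw
  have hT' : T = fun w => min (we w) (wb w) := funext hT
  have hmono : MonotoneOn T (Set.Ioi 0) := fun x hx y hy hxy => by
    rw [hT', hwe']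
    exact min_le_min (monotone_clippedAverageInf hxy)
      (monotoneOn_of_logb_eq one_lt_two hwbpos hwb' monotone_clippedAverageInf hx hy hxy)
  have hcont : ContinuousOn T (Set.Ioi 0) := by
    rw [hT', hwe']
    exact lipschitzWith_one_clippedAverageInf.continuous.continuousOn.inf
      (continuousOn_of_logb_eq one_lt_two hwbpos hwb'
        lipschitzWith_one_clippedAverageInf.continuous)
  have hle (w : ℝ) (hw : wstar ≤ w) : T w ≤ w := by
    rw [hT] at hfix ⊢
    rcases min_choice (we wstar) (wb wstar) with h | h <;> rw [h] at hfix
    · rw [hwe'] at hfix ⊢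
      exact (min_le_left _ _).trans
        (le_self_of_monotone_sub monotone_sub_clippedAverageInf hfix hw)
    · exact (min_le_right _ _).trans (le_self_of_logb_eq one_lt_two hwbpos hwb'
        monotone_sub_clippedAverageInf hwstar hfix hw)
  have hpos : Set.Ici wstar ⊆ Set.Ioi 0 := Set.Ici_subset_Ioi.2 hwstar
  obtain ⟨hanti, hlim⟩ := antitone_and_tendsto_of_map_le_self (hmono.mono hpos)
    (hcont.mono hpos) hfix hle (fun w hw => huniq w (hpos hw)) hstart hiter
  exact ⟨hmono, fun k => hanti k.le_succ, hlim⟩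

/-- For the logarithmic rate function, the map
`T(w) = min{w^e(w), w^b(w)}` built from the energy and data causality bounds with
correction terms `min{1/γ_l, w}` and `log₂(min{1/γ_l, w})` is monotone non-decreasing
on `(0,∞)`, and the fixed-point iteration started from any `w⁽¹⁾ ≥ w*` (where `w*` is
the unique positive fixed point of `T`) is non-increasing and converges to `w*`. -/
theorem stmt6 (N n : ℕ) (hn : n ≤ N) (e b : ℝ) (he : 0 < e) (hb : 0 < b)
    (H B γch : ℕ → ℝ) (hH : ∀ l, 0 ≤ H l) (hB : ∀ l, 0 ≤ B l) (hγ : ∀ l, 0 < γch l)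
    (we wb T : ℝ → ℝ)
    (hwe : ∀ w : ℝ, we w =
      (Finset.range (N - n + 1)).inf'
        (Finset.nonempty_range_iff.mpr (Nat.succ_ne_zero _))
        (fun u => (e + (∑ l ∈ Finset.Icc (n+1) (n+u), H l)
          + ∑ l ∈ Finset.Icc n (n+u), min (1/γch l) w) / (u+1)))
    (hwbpos : ∀ w : ℝ, 0 < w → 0 < wb w)
    (hwb : ∀ w : ℝ, 0 < w → Real.logb 2 (wb w) =
      (Finset.range (N - n + 1)).inf'
        (Finset.nonempty_range_iff.mpr (Nat.succ_ne_zero _))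
        (fun v => (b + (∑ l ∈ Finset.Icc (n+1) (n+v), B l)
          + (1/2) * ∑ l ∈ Finset.Icc n (n+v), Real.logb 2 (min (1/γch l) w))
          / ((v+1)/2)))
    (hT : ∀ w : ℝ, T w = min (we w) (wb w))
    (wstar : ℝ) (hwstar : 0 < wstar) (hfix : T wstar = wstar)
    (huniq : ∀ w : ℝ, 0 < w → T w = w → w = wstar)
    (wseq : ℕ → ℝ) (hstart : wstar ≤ wseq 0)
    (hiter : ∀ k, wseq (k+1) = T (wseq k)) :
    MonotoneOn T (Set.Ioi (0:ℝ)) ∧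
    (∀ k, wseq (k+1) ≤ wseq k) ∧
    Filter.Tendsto wseq Filter.atTop (nhds wstar) :=
  stmt6_general N n e b H B γch hγ we wb T hwe hwbpos hwb hT wstar hwstar hfix huniq wseq hstart
    hiter
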